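/- arXiv:1406.3716 — 2 statements merged into one kernel-verified Lean document; each statement's English description precedes it below -/
import Mathlib

section
/- Suppose ρ = 0, u ≠ 0, and −π/σ < u < π/σ. Then Λ(u,t) is finite for all sufficiently small t > 0 and lim_{t→0+} Λ(u,t) = Λ⁽⁰⁾(u), where Λ⁽⁰⁾(u) = (v₀·u/σ)·tan(uσ/2) − x₀·u. -/
/-!
As `t → 0`, `S(u,t) → |uσ/2|`, which lies in `(0, π/2)` because `0 < |u| < π/σ`; hence
`G(u,t) → |uσ| cos |uσ/2| > 0`. So `S` and `G` stay positive for small `t`, `Λ(u,·)` is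
continuous at `t = 0`, and its value there is the limit: the logarithmic term carries a factor
`t`, and `u² sin s / (2 s cos s) = (u/σ) tan(uσ/2)` for `s = |uσ/2|` since `s tan s` is even.
-/

open Filter Topology

theorem Real.abs_mul_tan_abs (x : ℝ) : |x| * Real.tan |x| = x * Real.tan x := by
  rcases abs_cases x with ⟨h, -⟩ | ⟨h, -⟩ <;> simp [h, Real.tan_neg]

namespace Heston

noncomputable section

def S (σ k b u t : ℝ) : ℝ :=
  (1 / 2) * Real.sqrt (u ^ 2 * σ ^ 2 - 2 * t * u * k * σ ^ 2 - t ^ 2 * b ^ 2)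

def G (σ k b u t : ℝ) : ℝ :=
  2 * S σ k b u t * Real.cos (S σ k b u t) + b * t * Real.sin (S σ k b u t)

def Λ (r k a b σ v₀ x₀ u t : ℝ) : ℝ :=
  -(t * r * u) +
    t * (a / σ ^ 2) * (b * t - 2 * Real.log (G σ k b u t / (2 * S σ k b u t))) +
    v₀ * (u ^ 2 - 2 * t * k * u) * Real.sin (S σ k b u t) / G σ k b u t - u * x₀

end

variable {r k a b σ v₀ x₀ : ℝ}

@[fun_prop]
theorem continuous_S (u : ℝ) : Continuous (S σ k b u) := by
  unfold S
  fun_prop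

@[fun_prop]
theorem continuous_G (u : ℝ) : Continuous (G σ k b u) := by
  unfold G
  fun_prop

theorem continuousAt_Λ {u t : ℝ} (hS : S σ k b u t ≠ 0) (hG : G σ k b u t ≠ 0) :
    ContinuousAt (Λ r k a b σ v₀ x₀ u) t := by
  unfold Λ
  fun_prop (disch := simp [hS, hG])

theorem S_zero (u : ℝ) : S σ k b u 0 = |u * σ / 2| := by
  have : u ^ 2 * σ ^ 2 - 2 * 0 * u * k * σ ^ 2 - 0 ^ 2 * b ^ 2 = (u * σ) ^ 2 := by ring
  rw [S, this, Real.sqrt_sq_eq_abs, abs_div, abs_two]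
  ring

theorem G_zero (u : ℝ) : G σ k b u 0 = 2 * |u * σ / 2| * Real.cos |u * σ / 2| := by
  simp [G, S_zero]

theorem G_zero_pos {u : ℝ} (hu : u * σ ≠ 0) (hπ : |u * σ| < Real.pi) :
    0 < G σ k b u 0 := by
  have hs : 0 < |u * σ / 2| := by positivity
  have hs' : |u * σ / 2| < Real.pi / 2 := by
    rw [abs_div, abs_two]
    linarith
  rw [G_zero]
  have := Real.cos_pos_of_mem_Ioo ⟨by linarith, hs'⟩
  positivity

theorem Λ_zero (u : ℝ) :
    Λ r k a b σ v₀ x₀ u 0 = v₀ * u / σ * Real.tan (u * σ / 2) - x₀ * u := by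
  suffices key : u ^ 2 * Real.sin |u * σ / 2| / (2 * |u * σ / 2| * Real.cos |u * σ / 2|) =
      u / σ * Real.tan (u * σ / 2) by
    simp only [Λ, G_zero, S_zero]
    linear_combination v₀ * key
  rcases eq_or_ne u 0 with rfl | hu
  · simp
  rcases eq_or_ne σ 0 with rfl | hσ
  · simp
  have hx : |u * σ / 2| ≠ 0 := by positivity
  calc u ^ 2 * Real.sin |u * σ / 2| / (2 * |u * σ / 2| * Real.cos |u * σ / 2|)
      = u ^ 2 * (|u * σ / 2| * Real.tan |u * σ / 2|) / (2 * |u * σ / 2| ^ 2) := by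
        rw [Real.tan_eq_sin_div_cos]; field_simp
    _ = u / σ * Real.tan (u * σ / 2) := by
        rw [Real.abs_mul_tan_abs, sq_abs]; field_simp

end Heston

open Heston in
theorem heston_Lambda0_uncorrelated_general
    (r k a b σ v₀ x₀ : ℝ) (hσ : 0 < σ)
    (S G Λ : ℝ → ℝ → ℝ)
    (hS : ∀ u t : ℝ, S u t = (1 / 2) *
      Real.sqrt (u ^ 2 * σ ^ 2 - 2 * t * u * k * σ ^ 2 - t ^ 2 * b ^ 2))
    (hG : ∀ u t : ℝ, G u t =
      2 * S u t * Real.cos (S u t) + b * t * Real.sin (S u t))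
    (hΛ : ∀ u t : ℝ, Λ u t =
      -(t * r * u) +
        t * (a / σ ^ 2) * (b * t - 2 * Real.log (G u t / (2 * S u t))) +
        v₀ * (u ^ 2 - 2 * t * k * u) * Real.sin (S u t) / G u t - u * x₀)
    (u : ℝ) (hu : u ≠ 0)
    (hul : -(Real.pi / σ) < u) (huu : u < Real.pi / σ) :
    (∃ δ > (0 : ℝ), ∀ t ∈ Set.Ioo (0 : ℝ) δ, 0 < S u t ∧ 0 < G u t) ∧
    Tendsto (fun t : ℝ => Λ u t) (𝓝[>] (0 : ℝ))
      (𝓝 (v₀ * u / σ * Real.tan (u * σ / 2) - x₀ * u)) := by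
  obtain rfl : S = Heston.S σ k b := funext₂ hS
  obtain rfl : G = Heston.G σ k b := funext₂ hG
  obtain rfl : Λ = Heston.Λ r k a b σ v₀ x₀ := funext₂ hΛ
  have huσ : u * σ ≠ 0 := mul_ne_zero hu hσ.ne'
  have hπ : |u * σ| < Real.pi := by
    rw [abs_mul, abs_of_pos hσ, ← lt_div_iff₀ hσ]
    exact abs_lt.2 ⟨hul, huu⟩
  have hS₀ : 0 < Heston.S σ k b u 0 := by rw [S_zero]; positivity
  have hG₀ : 0 < Heston.G σ k b u 0 := G_zero_pos huσ hπ
  refine ⟨?_, ?_⟩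
  · have hpos := ((continuous_S u).continuousAt.eventually (lt_mem_nhds hS₀)).and
      ((continuous_G u).continuousAt.eventually (lt_mem_nhds hG₀))
    obtain ⟨δ, hδ, h⟩ := Metric.eventually_nhds_iff.1 hpos
    exact ⟨δ, hδ, fun t ht => h (by rw [Real.dist_eq, sub_zero, abs_of_pos ht.1]; exact ht.2)⟩
  · rw [← Λ_zero (r := r) (k := k) (a := a) (b := b)]
    exact (continuousAt_Λ hS₀.ne' hG₀.ne').tendsto.mono_left nhdsWithin_le_nhds

/-- Theorem 5.1 (uncorrelated case ρ = 0): if u ≠ 0 satisfies −π/σ < u < π/σ, then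
the rescaled cumulant generating function Λ(u,t) of the Heston log-price is finite
for all sufficiently small t > 0 (the expressions S(u,t), G(u,t) being positive),
and lim_{t→0⁺} Λ(u,t) = Λ⁽⁰⁾(u) = (v₀ u/σ) tan(uσ/2) − x₀ u. -/
theorem heston_Lambda0_uncorrelated
    (r k a b σ v₀ x₀ : ℝ) (ha : 0 ≤ a) (hb : 0 ≤ b) (hσ : 0 < σ) (hv₀ : 0 < v₀)
    (S G Λ : ℝ → ℝ → ℝ)
    (hS : ∀ u t : ℝ, S u t = (1 / 2) *
      Real.sqrt (u ^ 2 * σ ^ 2 - 2 * t * u * k * σ ^ 2 - t ^ 2 * b ^ 2))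
    (hG : ∀ u t : ℝ, G u t =
      2 * S u t * Real.cos (S u t) + b * t * Real.sin (S u t))
    (hΛ : ∀ u t : ℝ, Λ u t =
      -(t * r * u) +
        t * (a / σ ^ 2) * (b * t - 2 * Real.log (G u t / (2 * S u t))) +
        v₀ * (u ^ 2 - 2 * t * k * u) * Real.sin (S u t) / G u t - u * x₀)
    (u : ℝ) (hu : u ≠ 0)
    (hul : -(Real.pi / σ) < u) (huu : u < Real.pi / σ) :
    (∃ δ > (0 : ℝ), ∀ t ∈ Set.Ioo (0 : ℝ) δ, 0 < S u t ∧ 0 < G u t) ∧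
    Tendsto (fun t : ℝ => Λ u t) (𝓝[>] (0 : ℝ))
      (𝓝 (v₀ * u / σ * Real.tan (u * σ / 2) - x₀ * u)) :=
  heston_Lambda0_uncorrelated_general r k a b σ v₀ x₀ hσ S G Λ hS hG hΛ u hu hul huu
end

section
/- Suppose ρ ≠ 0 and u lies in the interval ( −(2/(σ√(1−ρ²)))·arctan(√(1−ρ²)/ρ), (2/(σ√(1−ρ²)))·(π − arctan(√(1−ρ²)/ρ)) ). Then ∂²Λ⁽⁰⁾(u) = v₀·S(u) / ( 2σ[ √(1−ρ²)·cos(θu) + ρ·sin(θu) ]³ ), where S(u) = (2θ + σ√(1−ρ²))·[ ρ√(1−ρ²)·sin(θu) + (1−ρ²)·cos(θu) ] + 2σθ(1−ρ²)·u·[ √(1−ρ²)·sin(θu) − ρ·cos(θu) ]. If ρ = 0 and −π/σ < u < π/σ, then ∂²Λ⁽⁰⁾(u) = (v₀/(2σ))·( (2θ + σ)·cos(θu) + 2θσu·sin(θu) )/cos³(θu) with θ = σ/2. -/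
open Filter Topology Set Real

/-! Writing `D u = a cos θu + b sin θu`, the quotient `sin θu / D u` has the remarkably simple
derivative `θ a / D²`, since `θ cos θu · D − sin θu · D'` collapses to `θ a (cos² + sin²)`.
Two differentiations of `u · sin θu / D u` are therefore elementary. The denominator
`√(1-ρ²) cos x + ρ sin x` does not vanish on the stated interval because
`a cos x + b sin x = (b / cos β) sin (x + β)` with `β = arctan (a / b)`. -/

theorem iteratedDeriv_two_eq_of_hasDerivAt {𝕜 F : Type*} [NontriviallyNormedField 𝕜]
    [NormedAddCommGroup F] [NormedSpace 𝕜 F] {f f' : 𝕜 → F} {x : 𝕜} {y : F}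
    (hf : ∀ᶠ z in 𝓝 x, HasDerivAt f (f' z) z) (hf' : HasDerivAt f' y x) :
    iteratedDeriv 2 f x = y := by
  have hderiv : deriv f =ᶠ[𝓝 x] f' := hf.mono fun z hz => hz.deriv
  rw [iteratedDeriv_succ, iteratedDeriv_one, hderiv.deriv_eq, hf'.deriv]

theorem mul_cos_add_mul_sin_eq {a b : ℝ} (hb : b ≠ 0) (x : ℝ) :
    a * cos x + b * sin x = b / cos (arctan (a / b)) * sin (x + arctan (a / b)) := by
  have hcos : cos (arctan (a / b)) ≠ 0 := (cos_arctan_pos _).ne'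
  have htan : sin (arctan (a / b)) = a / b * cos (arctan (a / b)) := by
    rw [← div_eq_iff hcos, ← tan_eq_sin_div_cos, tan_arctan]
  rw [sin_add, htan]
  field_simp
  ring

theorem mul_cos_add_mul_sin_ne_zero {a b x : ℝ} (hb : b ≠ 0)
    (hx : x ∈ Ioo (-arctan (a / b)) (π - arctan (a / b))) :
    a * cos x + b * sin x ≠ 0 := by
  rw [mul_cos_add_mul_sin_eq hb]
  exact mul_ne_zero (div_ne_zero hb (cos_arctan_pos _).ne')
    (sin_pos_of_pos_of_lt_pi (by linarith [hx.1]) (by linarith [hx.2])).ne'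

theorem mul_mem_Ioo_of_mem_Ioo_inv_mul {k s t u : ℝ} (hk : 0 < k)
    (hu : u ∈ Ioo (k⁻¹ * s) (k⁻¹ * t)) : k * u ∈ Ioo s t :=
  ⟨(inv_mul_lt_iff₀ hk).1 hu.1, (lt_inv_mul_iff₀ hk).1 hu.2⟩

noncomputable def trigComb (a b θ u : ℝ) : ℝ := a * cos (θ * u) + b * sin (θ * u)

section trigComb

variable (a b θ : ℝ) {x : ℝ}

theorem continuous_trigComb : Continuous (trigComb a b θ) := by
  unfold trigComb; fun_prop

theorem hasDerivAt_sin_mul (x : ℝ) : HasDerivAt (fun u => sin (θ * u)) (θ * cos (θ * x)) x := by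
  simpa [mul_comm] using ((hasDerivAt_id x).const_mul θ).sin

theorem hasDerivAt_cos_mul (x : ℝ) :
    HasDerivAt (fun u => cos (θ * u)) (-(θ * sin (θ * x))) x := by
  simpa [mul_comm] using ((hasDerivAt_id x).const_mul θ).cos

theorem hasDerivAt_trigComb (x : ℝ) :
    HasDerivAt (trigComb a b θ) (θ * (b * cos (θ * x) - a * sin (θ * x))) x :=
  (((hasDerivAt_cos_mul θ x).const_mul a).add
    ((hasDerivAt_sin_mul θ x).const_mul b)).congr_deriv (by ring)

variable {a b θ}

theorem hasDerivAt_sin_div_trigComb (hx : trigComb a b θ x ≠ 0) :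
    HasDerivAt (fun u => sin (θ * u) / trigComb a b θ u) (θ * a / trigComb a b θ x ^ 2) x := by
  refine ((hasDerivAt_sin_mul θ x).fun_div (hasDerivAt_trigComb a b θ x) hx).congr_deriv ?_
  congr 1
  unfold trigComb
  linear_combination θ * a * sin_sq_add_cos_sq (θ * x)

theorem hasDerivAt_div_trigComb_sq (c : ℝ) (hx : trigComb a b θ x ≠ 0) :
    HasDerivAt (fun u => c / trigComb a b θ u ^ 2)
      (-2 * c * θ * (b * cos (θ * x) - a * sin (θ * x)) / trigComb a b θ x ^ 3) x := by
  refine ((hasDerivAt_const x c).fun_div ((hasDerivAt_trigComb a b θ x).fun_pow 2)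
    (pow_ne_zero 2 hx)).congr_deriv ?_
  field_simp
  ring

theorem iteratedDeriv_two_mul_sin_div_trigComb_sub (k m : ℝ) (hx : trigComb a b θ x ≠ 0) :
    iteratedDeriv 2 (fun u => k * (u * (sin (θ * u) / trigComb a b θ u)) - m * u) x =
      2 * k * θ * a * (trigComb a b θ x - θ * x * (b * cos (θ * x) - a * sin (θ * x))) /
        trigComb a b θ x ^ 3 := by
  refine iteratedDeriv_two_eq_of_hasDerivAt
    (f' := fun u => k * (sin (θ * u) / trigComb a b θ u + u * (θ * a / trigComb a b θ u ^ 2)) - m)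
    ?_ ?_
  · filter_upwards [(continuous_trigComb a b θ).continuousAt.eventually_ne hx] with z hz
    exact ((((hasDerivAt_id' z).mul (hasDerivAt_sin_div_trigComb hz)).const_mul k).sub
      ((hasDerivAt_id' z).const_mul m)).congr_deriv (by ring)
  · refine ((((hasDerivAt_sin_div_trigComb hx).add ((hasDerivAt_id' x).mul
      (hasDerivAt_div_trigComb_sq (θ * a) hx))).const_mul k).sub_const m).congr_deriv ?_
    field_simp
    ring

end trigComb

theorem heston_second_derivative_Lambda0_general
    (σ ρ v₀ x₀ : ℝ) (hσ : 0 < σ) (hρ₁ : -1 < ρ) (hρ₂ : ρ < 1)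
    (θ : ℝ) (hθ : θ = σ * Real.sqrt (1 - ρ ^ 2) / 2)
    (Λ₀ : ℝ → ℝ)
    (hΛ₀ : ∀ u : ℝ, Λ₀ u =
      v₀ * u * Real.sin (θ * u) /
        (σ * (Real.sqrt (1 - ρ ^ 2) * Real.cos (θ * u) +
          ρ * Real.sin (θ * u))) - x₀ * u) :
    (ρ ≠ 0 →
      ∀ u ∈ Set.Ioo
        (-(2 / (σ * Real.sqrt (1 - ρ ^ 2))) *
          Real.arctan (Real.sqrt (1 - ρ ^ 2) / ρ))
        ((2 / (σ * Real.sqrt (1 - ρ ^ 2))) *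
          (Real.pi - Real.arctan (Real.sqrt (1 - ρ ^ 2) / ρ))),
        iteratedDeriv 2 Λ₀ u =
          v₀ * ((2 * θ + σ * Real.sqrt (1 - ρ ^ 2)) *
                (ρ * Real.sqrt (1 - ρ ^ 2) * Real.sin (θ * u) +
                  (1 - ρ ^ 2) * Real.cos (θ * u)) +
              2 * σ * θ * (1 - ρ ^ 2) * u *
                (Real.sqrt (1 - ρ ^ 2) * Real.sin (θ * u) -
                  ρ * Real.cos (θ * u))) /
            (2 * σ * (Real.sqrt (1 - ρ ^ 2) * Real.cos (θ * u) +
                ρ * Real.sin (θ * u)) ^ 3)) ∧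
    (ρ = 0 →
      ∀ u ∈ Set.Ioo (-(Real.pi / σ)) (Real.pi / σ),
        iteratedDeriv 2 Λ₀ u =
          v₀ / (2 * σ) *
            ((2 * θ + σ) * Real.cos (θ * u) +
              2 * θ * σ * u * Real.sin (θ * u)) /
            Real.cos (θ * u) ^ 3) := by
  set c := Real.sqrt (1 - ρ ^ 2) with hc
  have hΛ : Λ₀ = fun u => v₀ / σ * (u * (sin (θ * u) / trigComb c ρ θ u)) - x₀ * u :=
    funext fun u => by rw [hΛ₀, trigComb, ← div_div]; ring
  subst hΛ
  constructor
  · intro hρ u hu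
    have hc_pos : 0 < c := Real.sqrt_pos.2 (by nlinarith)
    have hθ_pos : 0 < θ := by rw [hθ]; positivity
    rw [show 2 / (σ * c) = θ⁻¹ by rw [hθ, inv_div], neg_mul, ← mul_neg] at hu
    have hD := mul_cos_add_mul_sin_ne_zero hρ (mul_mem_Ioo_of_mem_Ioo_inv_mul hθ_pos hu)
    rw [iteratedDeriv_two_mul_sin_div_trigComb_sub _ _ hD, trigComb,
      ← Real.sq_sqrt (by nlinarith : 0 ≤ 1 - ρ ^ 2), ← hc, hθ]
    field_simp
    ring
  · rintro rfl u hu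
    have hc_one : c = 1 := by norm_num [hc]
    rw [hc_one] at hθ ⊢
    have hθ_pos : 0 < θ := by rw [hθ]; positivity
    rw [show π / σ = θ⁻¹ * (π / 2) by rw [hθ]; field_simp, ← mul_neg] at hu
    have hcos := cos_pos_of_mem_Ioo (mul_mem_Ioo_of_mem_Ioo_inv_mul hθ_pos hu)
    have hD : trigComb 1 0 θ u ≠ 0 := by simpa [trigComb] using hcos.ne'
    rw [iteratedDeriv_two_mul_sin_div_trigComb_sub _ _ hD, trigComb, hθ]
    field_simp [hcos.ne']
    ring

/-- Lemma 5.3: the second derivative of the limiting cumulant generating function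
Λ⁽⁰⁾ of the Heston log-price. If ρ ≠ 0 and u lies in the interval
( −(2/(σ√(1−ρ²))) arctan(√(1−ρ²)/ρ), (2/(σ√(1−ρ²)))(π − arctan(√(1−ρ²)/ρ)) ), then
∂²Λ⁽⁰⁾(u) = v₀ S(u) / (2σ[√(1−ρ²) cos(θu) + ρ sin(θu)]³) with
S(u) = (2θ + σ√(1−ρ²))[ρ√(1−ρ²) sin(θu) + (1−ρ²) cos(θu)]
      + 2σθ(1−ρ²)u[√(1−ρ²) sin(θu) − ρ cos(θu)].
If ρ = 0 and −π/σ < u < π/σ, then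
∂²Λ⁽⁰⁾(u) = (v₀/(2σ))((2θ + σ) cos(θu) + 2θσu sin(θu))/cos³(θu), θ = σ/2. -/
theorem heston_second_derivative_Lambda0
    (σ ρ v₀ x₀ : ℝ) (hσ : 0 < σ) (hρ₁ : -1 < ρ) (hρ₂ : ρ < 1) (hv₀ : 0 < v₀)
    (θ : ℝ) (hθ : θ = σ * Real.sqrt (1 - ρ ^ 2) / 2)
    (Λ₀ : ℝ → ℝ)
    (hΛ₀ : ∀ u : ℝ, Λ₀ u =
      v₀ * u * Real.sin (θ * u) /
        (σ * (Real.sqrt (1 - ρ ^ 2) * Real.cos (θ * u) +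
          ρ * Real.sin (θ * u))) - x₀ * u) :
    (ρ ≠ 0 →
      ∀ u ∈ Set.Ioo
        (-(2 / (σ * Real.sqrt (1 - ρ ^ 2))) *
          Real.arctan (Real.sqrt (1 - ρ ^ 2) / ρ))
        ((2 / (σ * Real.sqrt (1 - ρ ^ 2))) *
          (Real.pi - Real.arctan (Real.sqrt (1 - ρ ^ 2) / ρ))),
        iteratedDeriv 2 Λ₀ u =
          v₀ * ((2 * θ + σ * Real.sqrt (1 - ρ ^ 2)) *
                (ρ * Real.sqrt (1 - ρ ^ 2) * Real.sin (θ * u) +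
                  (1 - ρ ^ 2) * Real.cos (θ * u)) +
              2 * σ * θ * (1 - ρ ^ 2) * u *
                (Real.sqrt (1 - ρ ^ 2) * Real.sin (θ * u) -
                  ρ * Real.cos (θ * u))) /
            (2 * σ * (Real.sqrt (1 - ρ ^ 2) * Real.cos (θ * u) +
                ρ * Real.sin (θ * u)) ^ 3)) ∧
    (ρ = 0 →
      ∀ u ∈ Set.Ioo (-(Real.pi / σ)) (Real.pi / σ),
        iteratedDeriv 2 Λ₀ u =
          v₀ / (2 * σ) *
            ((2 * θ + σ) * Real.cos (θ * u) +
              2 * θ * σ * u * Real.sin (θ * u)) /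
            Real.cos (θ * u) ^ 3) :=
  heston_second_derivative_Lambda0_general σ ρ v₀ x₀ hσ hρ₁ hρ₂ θ hθ Λ₀ hΛ₀
end
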